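/- arXiv:1609.09531 — 8 statements merged into one kernel-verified Lean document; each statement's English description precedes it below -/
import Mathlib

section
/- Let F be a field of characteristic p, G a finite abelian group of exponent dividing p^r, and M the augmentation ideal of F[G]. Then M = {a ∈ F[G] : a^{p^r} = 0}. -/
/-!
In characteristic `p` the map `a ↦ a ^ p ^ r` is additive on `F[G]`, and it sends `c • X^g` to
`c ^ p ^ r • X^(p ^ r • g) = c ^ p ^ r • 1`. Hence `a ^ p ^ r = ε(a) ^ p ^ r • 1`, where `ε` is the
augmentation, and in a field this vanishes exactly when `ε(a) = 0`.
-/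

namespace AddMonoidAlgebra

variable {k G : Type*} [CommSemiring k] [AddCommMonoid G]

instance (p : ℕ) [ExpChar k p] : ExpChar k[G] p :=
  expChar_of_injective_ringHom (f := singleZeroRingHom) single_right_injective p

theorem pow_expChar_pow_eq_single_zero (p : ℕ) [ExpChar k p] {n : ℕ}
    (hG : ∀ g : G, p ^ n • g = 0) (a : k[G]) :
    a ^ p ^ n = single 0 (a.coeff.sum (fun _ c ↦ c) ^ p ^ n) := by
  induction a using AddMonoidAlgebra.induction_linear with
  | zero => simp [zero_pow (expChar_pow_pos k p n).ne']
  | add a b ha hb =>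
    rw [add_pow_expChar_pow, ha, hb, coeff_add,
      Finsupp.sum_add_index' (fun _ ↦ rfl) (fun _ _ _ ↦ rfl), add_pow_expChar_pow, single_add]
  | single g c => simp [hG]

end AddMonoidAlgebra

theorem augmentation_ideal_eq_nilpotents_general (F : Type*) [Field F] (p r : ℕ) (hp : p.Prime)
    [CharP F p] (G : Type*) [AddCommGroup G] [Fintype G]
    (hG : ∀ g : G, (p ^ r) • g = 0) (a : AddMonoidAlgebra F G) :
    (∑ g : G, a.coeff g = 0) ↔ a ^ (p ^ r) = 0 := by
  have : ExpChar F p := .prime hp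
  rw [AddMonoidAlgebra.pow_expChar_pow_eq_single_zero p hG, AddMonoidAlgebra.single_eq_zero,
    pow_eq_zero_iff (pow_ne_zero r hp.ne_zero), Finsupp.sum_fintype _ _ fun _ ↦ rfl]

/-- Let `F` be a field of characteristic `p`, `G` a finite abelian group of exponent dividing
`p^r`, and `M` the augmentation ideal of `F[G]`.  Then `M = {a ∈ F[G] : a^(p^r) = 0}`. -/
theorem augmentation_ideal_eq_nilpotents (F : Type*) [Field F] (p r : ℕ) (hp : p.Prime)
    (hr : 1 ≤ r) [CharP F p] (G : Type*) [AddCommGroup G] [Fintype G]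
    (hG : ∀ g : G, (p ^ r) • g = 0) (a : AddMonoidAlgebra F G) :
    (∑ g : G, a.coeff g = 0) ↔ a ^ (p ^ r) = 0 :=
  augmentation_ideal_eq_nilpotents_general F p r hp G hG a
end

section
/- Let F be a field of characteristic p and G the additive group of the Galois ring GR(p^r, m), generated as a Z/p^r-module by 1, α, ..., α^{m−1}. Then in F[G], the product ∏_{l=0}^{m−1} (X^{α^l} − 1)^{p^r − 1} equals ∑_{g ∈ G} X^g. -/
/-!
In characteristic `p`, `(x - 1) ^ p ^ r = x ^ p ^ r - 1`, so dividing by `x - 1` gives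
`(x - 1) ^ (p ^ r - 1) = 1 + x + ⋯ + x ^ (p ^ r - 1)`. For `x = X ^ (α ^ l)` this is the sum of
`X ^ (c α ^ l)` over `c ∈ ZMod (p ^ r)`, and multiplying these sums over `l` expands into the sum
of `X ^ g` over all `g = ∑ c_l α ^ l ∈ G`.
-/

open Finset Polynomial

theorem Polynomial.X_sub_one_pow_eq_sum_range_X_pow (R : Type*) [CommRing R] (p : ℕ)
    [Fact p.Prime] [CharP R p] (r : ℕ) :
    (X - 1 : R[X]) ^ (p ^ r - 1) = ∑ k ∈ range (p ^ r), X ^ k := by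
  refine (monic_X_sub_C (1 : R)).isRegular.left ?_
  have hpos : 0 < p ^ r := pow_pos (Fact.out : p.Prime).pos r
  simp only [C_1]
  rw [← pow_succ', Nat.sub_add_cancel hpos, sub_pow_char_pow, one_pow, mul_geom_sum]

theorem sub_one_pow_eq_sum_range_pow {R A : Type*} [CommRing R] [Ring A] [Algebra R A] (p : ℕ)
    [Fact p.Prime] [CharP R p] (r : ℕ) (x : A) :
    (x - 1) ^ (p ^ r - 1) = ∑ k ∈ range (p ^ r), x ^ k := by
  simpa using congrArg (aeval x) (X_sub_one_pow_eq_sum_range_X_pow R p r)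

theorem ZMod.sum_range_natCast {M : Type*} [AddCommMonoid M] (n : ℕ) [NeZero n]
    (f : ZMod n → M) : ∑ k ∈ range n, f k = ∑ c : ZMod n, f c :=
  sum_nbij' (fun k => (k : ZMod n)) ZMod.val (fun _ _ => mem_univ _)
    (fun c _ => mem_range.2 c.val_lt) (fun _ hk => ZMod.val_cast_of_lt (mem_range.1 hk))
    (fun c _ => ZMod.natCast_zmod_val c) (fun _ _ => rfl)

namespace AddMonoidAlgebra

theorem prod_sum_single_pi_single {R ι M : Type*} [CommSemiring R] [Fintype ι] [DecidableEq ι]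
    [AddCommMonoid M] [Fintype M] :
    ∏ i : ι, ∑ c : M, single (Pi.single i c : ι → M) (1 : R) = ∑ g : ι → M, single g 1 := by
  rw [prod_univ_sum, Fintype.piFinset_univ]
  refine sum_congr rfl fun g _ => ?_
  rw [prod_single, univ_sum_single, prod_const_one]

theorem single_pi_single_sub_one_pow_eq_sum (R : Type*) [CommRing R] (p r : ℕ) [Fact p.Prime]
    [CharP R p] [NeZero (p ^ r)] {ι : Type*} [DecidableEq ι] (i : ι) :
    (single (Pi.single i 1 : ι → ZMod (p ^ r)) (1 : R) - 1) ^ (p ^ r - 1) =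
      ∑ c : ZMod (p ^ r), single (Pi.single i c : ι → ZMod (p ^ r)) (1 : R) := by
  rw [sub_one_pow_eq_sum_range_pow (R := R) p, ← ZMod.sum_range_natCast]
  refine sum_congr rfl fun k _ => ?_
  rw [single_pow, one_pow, ← Pi.single_smul', nsmul_eq_mul, mul_one]

end AddMonoidAlgebra

theorem prod_basis_pow_eq_sum_all_general (F : Type*) [Field F] (p r m : ℕ) (hp : p.Prime)
    [CharP F p] [NeZero (p ^ r)] :
    (∏ l : Fin m,
        (AddMonoidAlgebra.single (Pi.single l (1 : ZMod (p ^ r)) : Fin m → ZMod (p ^ r))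
            (1 : F) - 1) ^ (p ^ r - 1)) =
      ∑ g : Fin m → ZMod (p ^ r), AddMonoidAlgebra.single g (1 : F) := by
  have : Fact p.Prime := ⟨hp⟩
  simp only [AddMonoidAlgebra.single_pi_single_sub_one_pow_eq_sum F p r]
  exact AddMonoidAlgebra.prod_sum_single_pi_single

/-- Let `F` be a field of characteristic `p` and `G` the additive group of the Galois ring
`GR(p^r, m)`, i.e. the free `ZMod (p^r)`-module on the basis `1, α, …, α^(m-1)` (modelled as
`Fin m → ZMod (p^r)` with `α^l` the `l`-th standard basis vector).  Then in `F[G]`,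
`∏_{l=0}^{m-1} (X^(α^l) - 1)^(p^r - 1) = ∑_{g ∈ G} X^g`. -/
theorem prod_basis_pow_eq_sum_all (F : Type*) [Field F] (p r m : ℕ) (hp : p.Prime)
    (hr : 1 ≤ r) (hm : 1 ≤ m) [CharP F p] [NeZero (p ^ r)] :
    (∏ l : Fin m,
        (AddMonoidAlgebra.single (Pi.single l (1 : ZMod (p ^ r)) : Fin m → ZMod (p ^ r))
            (1 : F) - 1) ^ (p ^ r - 1)) =
      ∑ g : Fin m → ZMod (p ^ r), AddMonoidAlgebra.single g (1 : F) :=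
  prod_basis_pow_eq_sum_all_general F p r m hp
end

section
/- Let F = F_{p^r} and G the additive group of GR(p^r, m) with Z_{p^r}-basis 1, α, ..., α^{m−1}. For i ∈ {0, ..., p^{rm}−1} with p^r-adic expansion i = ∑_{l=0}^{m−1} i_l p^{lr}, set V_i = ∏_{l=0}^{m−1}(X^{α^l} − 1)^{i_l}. Then {V_i : 0 ≤ i ≤ p^{rm} − 1} is an F-linear basis of the group algebra F[G]. -/
/-! Writing `X^g = ∏ l, (1 + (X^(e l) - 1))^(g l)`, where the `e l` are the standard basis vectors
and `0 ≤ g l < n`, and expanding binomially puts every group element in the span of the `n^|ι|`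
products `∏ l, (X^(e l) - 1)^(κ l)` with `κ l < n`. Their number is the dimension of the group
algebra of `(ZMod n)^ι`, so these products form a basis. -/

open AddMonoidAlgebra Finset

theorem prod_pow_mem_of_forall_prod_sub_one_pow_mem {ι A : Type*} [Fintype ι] [CommRing A]
    (S : AddSubmonoid A) (x : ι → A) (n : ι → ℕ)
    (h : ∀ κ ≤ n, ∏ l, (x l - 1) ^ κ l ∈ S) : ∏ l, x l ^ n l ∈ S := by
  classical
  have binomial :
      ∀ l, x l ^ n l = ∑ k ∈ range (n l + 1), (x l - 1) ^ k * ((n l).choose k : A) := by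
    intro l
    conv_lhs => rw [← sub_add_cancel (x l) 1, add_pow]
    simp
  simp_rw [binomial, prod_univ_sum]
  refine sum_mem fun κ hκ => ?_
  rw [prod_mul_distrib, ← Nat.cast_prod, ← nsmul_eq_mul']
  refine nsmul_mem (h κ fun l => ?_) _
  exact Nat.lt_succ_iff.mp (mem_range.mp (Fintype.mem_piFinset.mp hκ l))

theorem single_eq_prod_single_pow {ι R : Type*} [Fintype ι] [DecidableEq ι] [CommSemiring R]
    {n : ℕ} [NeZero n] (g : ι → ZMod n) :
    single g (1 : R) = ∏ l, single (Pi.single l 1 : ι → ZMod n) (1 : R) ^ (g l).val := by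
  simp_rw [single_pow, one_pow, prod_single, prod_const_one]
  congr 1
  conv_lhs => rw [← Finset.univ_sum_single g]
  refine sum_congr rfl fun l _ => ?_
  rw [← Pi.single_smul, nsmul_one, ZMod.natCast_zmod_val]

section JenningsBasis

variable {ι : Type*} [Fintype ι] [DecidableEq ι] (R : Type*) [CommRing R] (n : ℕ) [NeZero n]

theorem top_le_span_prod_single_sub_one_pow :
    ⊤ ≤ Submodule.span R (Set.range fun κ : ι → Fin n =>
      ∏ l, (single (Pi.single l 1 : ι → ZMod n) (1 : R) - 1) ^ (κ l : ℕ)) := by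
  rw [← (AddMonoidAlgebra.basis (ι → ZMod n) R).span_eq, Submodule.span_le]
  rintro _ ⟨g, rfl⟩
  rw [basis_apply, single_eq_prod_single_pow]
  exact prod_pow_mem_of_forall_prod_sub_one_pow_mem (Submodule.span R _).toAddSubmonoid _ _
    fun κ hκ => Submodule.subset_span ⟨fun l => ⟨κ l, (hκ l).trans_lt (ZMod.val_lt _)⟩, rfl⟩

theorem card_fun_fin_eq_finrank [Nontrivial R] :
    Fintype.card (ι → Fin n) = Module.finrank R (AddMonoidAlgebra R (ι → ZMod n)) := by
  simp [Module.finrank_eq_card_basis (AddMonoidAlgebra.basis (ι → ZMod n) R), ZMod.card]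

noncomputable def jenningsBasis [Nontrivial R] :
    Module.Basis (ι → Fin n) R (AddMonoidAlgebra R (ι → ZMod n)) :=
  basisOfTopLeSpanOfCardEqFinrank _ (top_le_span_prod_single_sub_one_pow R n)
    (card_fun_fin_eq_finrank R n)

theorem jenningsBasis_apply [Nontrivial R] (κ : ι → Fin n) :
    jenningsBasis R n κ = ∏ l, (single (Pi.single l 1 : ι → ZMod n) (1 : R) - 1) ^ (κ l : ℕ) :=
  congrFun (coe_basisOfTopLeSpanOfCardEqFinrank _ _ _) κ

end JenningsBasis

theorem jennings_basis_galois_ring_general (p r m : ℕ)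
    [NeZero (p ^ r)] (F : Type*) [Field F]
    (V : ℕ → AddMonoidAlgebra F (Fin m → ZMod (p ^ r)))
    (hV : ∀ i : ℕ, V i = ∏ l : Fin m,
        (AddMonoidAlgebra.single (Pi.single l (1 : ZMod (p ^ r)) : Fin m → ZMod (p ^ r))
            (1 : F) - 1) ^ (i / p ^ (r * (l : ℕ)) % p ^ r)) :
    ∃ b : Module.Basis (Fin (p ^ (r * m))) F (AddMonoidAlgebra F (Fin m → ZMod (p ^ r))),
      ∀ i : Fin (p ^ (r * m)), b i = V i := by
  let digits : Fin (p ^ (r * m)) ≃ (Fin m → Fin (p ^ r)) :=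
    (finCongr (pow_mul p r m)).trans finFunctionFinEquiv.symm
  refine ⟨(jenningsBasis F (p ^ r)).reindex digits.symm, fun i => ?_⟩
  rw [Module.Basis.reindex_apply, Equiv.symm_symm, jenningsBasis_apply, hV]
  refine prod_congr rfl fun l _ => ?_
  simp [digits, finFunctionFinEquiv_symm_apply_val, pow_mul]

/-- Let `F = F_{p^r}` and `G` the additive group of `GR(p^r, m)` (modelled as the free
`ZMod (p^r)`-module `Fin m → ZMod (p^r)`, with `α^l` the `l`-th standard basis vector).
For `0 ≤ i ≤ p^(rm) - 1` with `p^r`-adic digits `i_l`, set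
`V i = ∏_l (X^(α^l) - 1)^(i_l)`.  Then `{V i : 0 ≤ i ≤ p^(rm) - 1}` is an `F`-linear basis
of the group algebra `F[G]`. -/
theorem jennings_basis_galois_ring (p r m : ℕ) (hp : p.Prime) (hr : 1 ≤ r) (hm : 1 ≤ m)
    [NeZero (p ^ r)] (F : Type*) [Field F] [Fintype F] (hF : Fintype.card F = p ^ r)
    (V : ℕ → AddMonoidAlgebra F (Fin m → ZMod (p ^ r)))
    (hV : ∀ i : ℕ, V i = ∏ l : Fin m,
        (AddMonoidAlgebra.single (Pi.single l (1 : ZMod (p ^ r)) : Fin m → ZMod (p ^ r))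
            (1 : F) - 1) ^ (i / p ^ (r * (l : ℕ)) % p ^ r)) :
    ∃ b : Module.Basis (Fin (p ^ (r * m))) F (AddMonoidAlgebra F (Fin m → ZMod (p ^ r))),
      ∀ i : Fin (p ^ (r * m)), b i = V i :=
  jennings_basis_galois_ring_general p r m F V hV
end

section
/- With notation as above, the set B_1 = {V_i : 1 ≤ i ≤ p^{rm} − 1} (i.e., those V_i with p^r-weight ω_{p^r}(i) ≥ 1) is an F-linear basis of the augmentation ideal M of F[G]. -/
/-!
Index `G = (ℤ/q)^m` by the numbers below `q^m`, reading `g` as `∑ (g l).val * q^l`. Peeling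
one factor `X_l - 1` off `∏ (X_l - 1)^(g l).val` and inducting on this index shows that the
product is `X^g` plus a combination of `X^h` with smaller index. Hence these products span
`F[G]`, and since there are `|G|` of them they form a basis. The product for `g = 0` is `1`,
and every other one has a factor `X_l - 1` in the kernel of the augmentation. So the others
form a basis of the augmentation ideal.
-/

open AddMonoidAlgebra Finset Submodule

theorem Module.Basis.span_image_compl_singleton_eq_ker {ι R M : Type*} [Ring R]
    [NoZeroDivisors R] [AddCommGroup M] [Module R M] (b : Module.Basis ι R M)
    (f : M →ₗ[R] R) (i₀ : ι) (h₀ : f (b i₀) ≠ 0) (h : ∀ i ≠ i₀, f (b i) = 0) :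
    span R (b '' {i₀}ᶜ) = LinearMap.ker f := by
  have hf : f = (b.coord i₀).smulRight (f (b i₀)) := b.ext fun i => by
    rcases eq_or_ne i i₀ with rfl | hi
    · simp
    · simp [h i hi, hi.symm]
  ext x
  rw [b.mem_span_image, LinearMap.mem_ker, hf, LinearMap.smulRight_apply, smul_eq_mul,
    mul_eq_zero, or_iff_left h₀, Set.subset_compl_singleton_iff, Finset.mem_coe,
    Finsupp.notMem_support_iff, Module.Basis.coord_apply]

namespace AddMonoidAlgebra

variable (R G : Type*) [CommSemiring R] [AddMonoid G]

noncomputable def augmentation : R[G] →ₐ[R] R := lift R R G 1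

variable {R G}

@[simp]
lemma augmentation_single (g : G) (c : R) : augmentation R G (single g c) = c := by
  simp [augmentation]

lemma augmentation_apply [Fintype G] (x : R[G]) : augmentation R G x = ∑ g, x.coeff g := by
  simp [augmentation, lift_apply, Finsupp.sum_fintype]

end AddMonoidAlgebra

lemma Fin.range_mk_Icc_one_sub_one (n : ℕ) [NeZero n] :
    Set.range (fun i : Icc 1 (n - 1) => (⟨i, by have := mem_Icc.mp i.2; omega⟩ : Fin n)) =
      {0}ᶜ := by
  ext i
  constructor
  · rintro ⟨j, rfl⟩ h
    have := (mem_Icc.mp j.2).1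
    simp only [Set.mem_singleton_iff, Fin.ext_iff, Fin.val_zero] at h
    omega
  · intro hi
    have : (i : ℕ) ≠ 0 := Fin.val_ne_iff.mpr hi
    exact ⟨⟨i, mem_Icc.mpr ⟨by omega, by omega⟩⟩, rfl⟩

lemma ZMod.val_finEquiv {q : ℕ} [NeZero q] (x : Fin q) : (ZMod.finEquiv q x).val = x := by
  obtain ⟨n, rfl⟩ := Nat.exists_eq_succ_of_ne_zero (NeZero.ne q)
  rfl

namespace Jennings

variable {q m : ℕ}

section GroupAlgebra

variable (R : Type*) [CommRing R]

noncomputable def factor (l : Fin m) : R[Fin m → ZMod q] := single (Pi.single l 1) 1 - 1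

noncomputable def elem (g : Fin m → ZMod q) : R[Fin m → ZMod q] :=
  ∏ l, factor R l ^ (g l).val

variable {R}

@[simp]
lemma elem_zero : elem R (0 : Fin m → ZMod q) = 1 := by
  simp [elem]

lemma augmentation_elem_of_ne_zero {g : Fin m → ZMod q} (hg : g ≠ 0) :
    augmentation R _ (elem R g) = 0 := by
  obtain ⟨l, hl⟩ := Function.ne_iff.mp hg
  rw [elem, map_prod]
  refine prod_eq_zero (mem_univ l) ?_
  simpa [factor] using zero_pow ((ZMod.val_ne_zero _).mpr hl)

lemma single_mul_factor (h : Fin m → ZMod q) (l : Fin m) :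
    single h (1 : R) * factor R l = single (h + Pi.single l 1) 1 - single h 1 := by
  rw [factor, mul_sub, mul_one, single_mul_single, mul_one]

end GroupAlgebra

variable [NeZero q]

variable (q m) in
def digitsEquiv : (Fin m → ZMod q) ≃ Fin (q ^ m) :=
  (Equiv.piCongrRight fun _ => (ZMod.finEquiv q).symm.toEquiv).trans finFunctionFinEquiv

lemma digitsEquiv_apply (g : Fin m → ZMod q) :
    (digitsEquiv q m g : ℕ) = ∑ l, (g l).val * q ^ (l : ℕ) := by
  rw [digitsEquiv, Equiv.trans_apply, finFunctionFinEquiv_apply]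
  refine sum_congr rfl fun l _ => ?_
  rw [← ZMod.val_finEquiv]
  simp

@[simp]
lemma digitsEquiv_zero : digitsEquiv q m 0 = 0 :=
  Fin.ext (by simp [digitsEquiv_apply])

@[simp]
lemma digitsEquiv_symm_zero : (digitsEquiv q m).symm 0 = 0 := by
  rw [Equiv.symm_apply_eq, digitsEquiv_zero]

lemma val_digitsEquiv_symm_apply (i : Fin (q ^ m)) (l : Fin m) :
    ((digitsEquiv q m).symm i l).val = i / q ^ (l : ℕ) % q := by
  simp [digitsEquiv, ZMod.val_finEquiv]

lemma digitsEquiv_add_single_le (g : Fin m → ZMod q) (l : Fin m) :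
    (digitsEquiv q m (g + Pi.single l 1) : ℕ) ≤ digitsEquiv q m g + q ^ (l : ℕ) := by
  have hle : ∀ k, ((g + Pi.single l 1 : Fin m → ZMod q) k).val ≤
      (g k).val + (Pi.single l 1 : Fin m → ℕ) k := by
    intro k
    rcases eq_or_ne k l with rfl | hk
    · have := ZMod.val_add_le (g k) 1
      have := ZMod.val_one_eq_one_mod q ▸ Nat.mod_le 1 q
      simp only [Pi.add_apply, Pi.single_eq_same]
      omega
    · simp [hk]
  rw [digitsEquiv_apply, digitsEquiv_apply]
  calc _ ≤ ∑ k, ((g k).val + (Pi.single l 1 : Fin m → ℕ) k) * q ^ (k : ℕ) :=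
        sum_le_sum fun k _ => Nat.mul_le_mul_right _ (hle k)
    _ = _ := by simp [add_mul, sum_add_distrib, Pi.single_apply]

lemma val_sub_single_add_single {g : Fin m → ZMod q} {l : Fin m} (hl : g l ≠ 0) (k : Fin m) :
    ((g - Pi.single l 1 : Fin m → ZMod q) k).val + (Pi.single l 1 : Fin m → ℕ) k =
      (g k).val := by
  rcases eq_or_ne k l with rfl | hk
  · have hq : q ≠ 1 := ZMod.nontrivial_iff.mp ⟨⟨_, _, hl⟩⟩
    have h1 : (1 : ZMod q).val ≤ (g k).val := by
      rw [ZMod.val_one'' hq]; exact ZMod.val_pos.mpr hl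
    simp only [Pi.sub_apply, Pi.single_eq_same, ZMod.val_sub h1]
    have := ZMod.val_one'' hq
    omega
  · simp [hk]

lemma digitsEquiv_sub_single_add {g : Fin m → ZMod q} {l : Fin m} (hl : g l ≠ 0) :
    (digitsEquiv q m (g - Pi.single l 1) : ℕ) + q ^ (l : ℕ) = digitsEquiv q m g := by
  simp_rw [digitsEquiv_apply, ← val_sub_single_add_single hl, add_mul, sum_add_distrib,
    Pi.single_apply]
  simp

noncomputable def lowerSpan (R : Type*) [CommRing R] (q m : ℕ) [NeZero q] (n : ℕ) :
    Submodule R R[Fin m → ZMod q] :=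
  span R ((single · 1) '' {h | (digitsEquiv q m h : ℕ) < n})

variable {R : Type*} [CommRing R]

lemma elem_eq_elem_sub_single_mul {g : Fin m → ZMod q} {l : Fin m} (hl : g l ≠ 0) :
    elem R g = elem R (g - Pi.single l 1) * factor R l := by
  simp_rw [elem, ← val_sub_single_add_single hl, pow_add, prod_mul_distrib, Pi.single_apply]
  simp

lemma single_mem_lowerSpan {h : Fin m → ZMod q} {n : ℕ} (hn : (digitsEquiv q m h : ℕ) < n) :
    single h (1 : R) ∈ lowerSpan R q m n :=
  subset_span ⟨h, hn, rfl⟩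

lemma mul_factor_mem_lowerSpan {x : R[Fin m → ZMod q]} {n : ℕ} (hx : x ∈ lowerSpan R q m n)
    (l : Fin m) : x * factor R l ∈ lowerSpan R q m (n + q ^ (l : ℕ)) := by
  suffices lowerSpan R q m n ≤
      (lowerSpan R q m (n + q ^ (l : ℕ))).comap (LinearMap.mulRight R (factor R l)) from this hx
  refine span_le.2 ?_
  rintro _ ⟨h, hh, rfl⟩
  rw [SetLike.mem_coe, mem_comap, LinearMap.mulRight_apply, single_mul_factor]
  exact sub_mem
    (single_mem_lowerSpan ((digitsEquiv_add_single_le h l).trans_lt (by simp at hh; omega)))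
    (single_mem_lowerSpan (by simp at hh; omega))

lemma elem_sub_single_mem_lowerSpan (g : Fin m → ZMod q) :
    elem R g - single g 1 ∈ lowerSpan R q m (digitsEquiv q m g) := by
  induction hn : (digitsEquiv q m g : ℕ) using Nat.strong_induction_on generalizing g with
  | _ n ih =>
  subst hn
  rcases eq_or_ne g 0 with rfl | hg
  · simp [one_def]
  obtain ⟨l, hl⟩ := Function.ne_iff.mp hg
  set g' := g - Pi.single l 1
  have hrank : (digitsEquiv q m g' : ℕ) + q ^ (l : ℕ) = digitsEquiv q m g :=
    digitsEquiv_sub_single_add hl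
  have hpos : 0 < q ^ (l : ℕ) := pow_pos (Nat.pos_of_ne_zero (NeZero.ne q)) _
  have hlt : (digitsEquiv q m g' : ℕ) < digitsEquiv q m g := by omega
  have hdecomp :
      elem R g - single g 1 = (elem R g' - single g' 1) * factor R l - single g' 1 := by
    rw [elem_eq_elem_sub_single_mul hl, sub_mul, single_mul_factor, sub_add_cancel]
    ring
  rw [hdecomp, ← hrank]
  exact sub_mem (mul_factor_mem_lowerSpan (ih _ hlt g' rfl) l)
    (single_mem_lowerSpan (Nat.lt_add_of_pos_right hpos))

lemma single_mem_span_elem (g : Fin m → ZMod q) :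
    single g (1 : R) ∈ span R (Set.range (elem R)) := by
  induction hn : (digitsEquiv q m g : ℕ) using Nat.strong_induction_on generalizing g with
  | _ n ih =>
  subst hn
  have hlower : lowerSpan R q m (digitsEquiv q m g) ≤ span R (Set.range (elem R)) := by
    refine span_le.2 ?_
    rintro _ ⟨h, hh, rfl⟩
    exact ih _ hh h rfl
  simpa using
    sub_mem (subset_span (Set.mem_range_self g)) (hlower (elem_sub_single_mem_lowerSpan g))

lemma span_range_elem : span R (Set.range (elem R (q := q) (m := m))) = ⊤ := by
  refine eq_top_iff.2 ((AddMonoidAlgebra.basis _ R).span_eq.symm.le.trans (span_le.2 ?_))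
  rintro _ ⟨g, rfl⟩
  simpa using single_mem_span_elem g

variable (q m) in
noncomputable def basis (F : Type*) [Field F] :
    Module.Basis (Fin m → ZMod q) F F[Fin m → ZMod q] :=
  basisOfTopLeSpanOfCardEqFinrank (elem F) span_range_elem.ge
    (Module.finrank_eq_card_basis (AddMonoidAlgebra.basis _ F)).symm

@[simp]
lemma coe_basis (F : Type*) [Field F] : ⇑(basis q m F) = elem F :=
  coe_basisOfTopLeSpanOfCardEqFinrank _ _ _

theorem linearIndependent_and_span_eq_ker_augmentation {F : Type*} [Field F]
    (V : ℕ → F[Fin m → ZMod q]) (hV : ∀ i, V i = ∏ l, factor F l ^ (i / q ^ (l : ℕ) % q)) :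
    LinearIndependent F (fun i : Icc 1 (q ^ m - 1) => V i) ∧
      span F (V '' Icc 1 (q ^ m - 1)) = LinearMap.ker (augmentation F _).toLinearMap := by
  let b := (basis q m F).reindex (digitsEquiv q m)
  have hb : ∀ i : Fin (q ^ m), b i = V i := fun i => by
    simp [b, hV, elem, val_digitsEquiv_symm_apply]
  let e : Icc 1 (q ^ m - 1) → Fin (q ^ m) := fun i => ⟨i, by have := mem_Icc.mp i.2; omega⟩
  have he : Function.Injective e := fun i j hij => Subtype.ext (congrArg Fin.val hij)
  have hVb : (fun i : Icc 1 (q ^ m - 1) => V i) = b ∘ e := funext fun i => (hb (e i)).symm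
  refine ⟨hVb ▸ b.linearIndependent.comp e he, ?_⟩
  rw [Set.image_eq_range]
  change span F (Set.range fun i : Icc 1 (q ^ m - 1) => V i) = _
  rw [hVb, Set.range_comp, Fin.range_mk_Icc_one_sub_one]
  refine b.span_image_compl_singleton_eq_ker _ 0 (by simp [b]) fun i hi => ?_
  simpa [b] using
    augmentation_elem_of_ne_zero ((digitsEquiv q m).symm_apply_eq.not.mpr (by simpa using hi))

end Jennings

theorem jennings_basis_augmentation_ideal_general (p r m : ℕ) [NeZero (p ^ r)] (F : Type*) [Field F]
    (V : ℕ → AddMonoidAlgebra F (Fin m → ZMod (p ^ r)))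
    (hV : ∀ i : ℕ, V i = ∏ l : Fin m,
        (AddMonoidAlgebra.single (Pi.single l (1 : ZMod (p ^ r)) : Fin m → ZMod (p ^ r))
            (1 : F) - 1) ^ (i / p ^ (r * (l : ℕ)) % p ^ r))
    (M : Submodule F (AddMonoidAlgebra F (Fin m → ZMod (p ^ r))))
    (hM : ∀ a : AddMonoidAlgebra F (Fin m → ZMod (p ^ r)),
      a ∈ M ↔ ∑ g : Fin m → ZMod (p ^ r), a.coeff g = 0) :
    LinearIndependent F (fun i : Finset.Icc 1 (p ^ (r * m) - 1) => V i) ∧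
      Submodule.span F (V '' Finset.Icc 1 (p ^ (r * m) - 1)) = M := by
  obtain rfl : M = LinearMap.ker (augmentation F _).toLinearMap :=
    SetLike.ext fun a => by
      rw [hM, LinearMap.mem_ker, AlgHom.toLinearMap_apply, augmentation_apply]
  simp_rw [pow_mul] at hV
  rw [pow_mul]
  exact Jennings.linearIndependent_and_span_eq_ker_augmentation V hV

/-- With `F = F_{p^r}` and `G` the additive group of `GR(p^r, m)` (modelled as
`Fin m → ZMod (p ^ r)`), the set `B₁ = {V i : 1 ≤ i ≤ p^(rm) - 1}` (those `V i` of
`p^r`-weight at least `1`) is an `F`-linear basis of the augmentation ideal `M` of `F[G]`. -/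
theorem jennings_basis_augmentation_ideal (p r m : ℕ) (hp : p.Prime) (hr : 1 ≤ r)
    (hm : 1 ≤ m) [NeZero (p ^ r)] (F : Type*) [Field F] [Fintype F]
    (hF : Fintype.card F = p ^ r)
    (V : ℕ → AddMonoidAlgebra F (Fin m → ZMod (p ^ r)))
    (hV : ∀ i : ℕ, V i = ∏ l : Fin m,
        (AddMonoidAlgebra.single (Pi.single l (1 : ZMod (p ^ r)) : Fin m → ZMod (p ^ r))
            (1 : F) - 1) ^ (i / p ^ (r * (l : ℕ)) % p ^ r))
    (M : Submodule F (AddMonoidAlgebra F (Fin m → ZMod (p ^ r))))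
    (hM : ∀ a : AddMonoidAlgebra F (Fin m → ZMod (p ^ r)),
      a ∈ M ↔ ∑ g : Fin m → ZMod (p ^ r), a.coeff g = 0) :
    LinearIndependent F (fun i : Finset.Icc 1 (p ^ (r * m) - 1) => V i) ∧
      Submodule.span F (V '' Finset.Icc 1 (p ^ (r * m) - 1)) = M :=
  jennings_basis_augmentation_ideal_general p r m F V hV M hM
end

section
/- With notation as above, for each t with 1 ≤ t ≤ m(p^r − 1), the set B_t = {V_i : ω_{p^r}(i) ≥ t} is an F-linear basis of M^t, the t-th power of the radical M of F[G]. -/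
/-!
Let `q = p ^ r`, write `e_g` for the basis element of `F[G]` given by `g ∈ G` and `e_l` for
the one given by the `l`-th unit vector.
The monomials `∏ l, (e_l - 1) ^ d l` with all `d l < q` span `F[G]` and there are `q ^ m` of
them, its dimension, so they form a basis. Let `W s` be the span of those of weight
`∑ l, d l ≥ s`. Since `(e_l - 1) ^ q = e_l ^ q - 1 = 0` in characteristic `p`, a product of two
monomials is either a monomial whose weight is the sum of the weights or zero, so
`W s * W t ≤ W (s + t)`. The identity `e_{g+h} - 1 = (e_g - 1)(e_h - 1) + (e_g - 1) + (e_h - 1)`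
then puts every `e_g - 1` into `W 1`, whence `M ≤ W 1` and `M ^ t ≤ W t`; conversely every
monomial of weight at least `t` is a product of at least `t` elements of `M`.
-/

open Finset

namespace AddMonoidAlgebra

variable {k G : Type*} [CommRing k]

theorem single_add_sub_one [AddCommMonoid G] (g h : G) :
    single (g + h) (1 : k) - 1 =
      (single g 1 - 1) * (single h 1 - 1) + (single g 1 - 1) + (single h 1 - 1) := by
  have hmul : single (g + h) (1 : k) = single g 1 * single h 1 := by
    rw [single_mul_single, one_mul]
  rw [hmul]
  ring

theorem single_sub_one_mem_of_mem_closure [AddCommMonoid G]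
    (S : Submodule k (AddMonoidAlgebra k G)) (hS : ∀ x ∈ S, ∀ y ∈ S, x * y ∈ S) {s : Set G}
    (hs : ∀ g ∈ s, single g (1 : k) - 1 ∈ S) {g : G} (hg : g ∈ AddSubmonoid.closure s) :
    single g (1 : k) - 1 ∈ S := by
  induction hg using AddSubmonoid.closure_induction with
  | mem g hg => exact hs g hg
  | zero => simp [← one_def]
  | add g h _ _ hg hh =>
    rw [single_add_sub_one]
    exact add_mem (add_mem (hS _ hg _ hh) hg) hh

theorem eq_sum_smul_single_sub_one_add [AddMonoid G] [Fintype G] (a : AddMonoidAlgebra k G) :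
    a = ∑ g, a.coeff g • (single g 1 - 1) + (∑ g, a.coeff g) • 1 := by
  have ha : ∑ g, a.coeff g • single g (1 : k) = a := (basis G k).sum_repr a
  simp only [smul_sub, sum_sub_distrib, sum_smul, ha, sub_add_cancel]

instance expChar [AddMonoid G] (p : ℕ) [ExpChar k p] : ExpChar (AddMonoidAlgebra k G) p :=
  expChar_of_injective_algebraMap (FaithfulSMul.algebraMap_injective k _) p

end AddMonoidAlgebra

open AddMonoidAlgebra

theorem Pi.addSubmonoidClosure_range_single_one (m q : ℕ) [NeZero q] :
    AddSubmonoid.closure (Set.range fun l : Fin m => (Pi.single l 1 : Fin m → ZMod q)) = ⊤ := by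
  refine eq_top_iff.2 fun g _ => ?_
  rw [← univ_sum_single g]
  refine sum_mem fun l _ => ?_
  rw [← ZMod.natCast_zmod_val (g l), ← nsmul_one, Pi.single_nsmul]
  exact nsmul_mem (AddSubmonoid.subset_closure (Set.mem_range_self l)) _

namespace JenningsBasis

variable {k : Type*} [CommRing k] {m q : ℕ}

noncomputable def X (l : Fin m) : AddMonoidAlgebra k (Fin m → ZMod q) :=
  single (Pi.single l 1) 1 - 1

noncomputable def monomial (d : Fin m → Fin q) : AddMonoidAlgebra k (Fin m → ZMod q) :=
  ∏ l, X l ^ (d l : ℕ)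

def weight (d : Fin m → Fin q) : ℕ := ∑ l, (d l : ℕ)

variable (k m q) in
noncomputable def filtration (s : ℕ) : Submodule k (AddMonoidAlgebra k (Fin m → ZMod q)) :=
  Submodule.span k (monomial '' {d | s ≤ weight d})

theorem X_pow_eq_zero {p r : ℕ} [ExpChar k p] (hpq : q = p ^ r) (l : Fin m) :
    (X l : AddMonoidAlgebra k (Fin m → ZMod q)) ^ q = 0 := by
  have hfrob : (X l + 1) ^ q = (X l : AddMonoidAlgebra k (Fin m → ZMod q)) ^ q + 1 := by
    rw [hpq, add_pow_expChar_pow, one_pow]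
  have horder : q • (Pi.single l 1 : Fin m → ZMod q) = 0 := by
    rw [← Pi.single_nsmul, nsmul_one, ZMod.natCast_self, Pi.single_zero]
  rwa [X, sub_add_cancel, single_pow, horder, one_pow, ← one_def, eq_comm, add_eq_right] at hfrob

theorem monomial_mul_monomial_mem {p r : ℕ} [ExpChar k p] (hpq : q = p ^ r)
    (d e : Fin m → Fin q) :
    (monomial d * monomial e : AddMonoidAlgebra k (Fin m → ZMod q)) ∈
      filtration k m q (weight d + weight e) := by
  have hprod : (monomial d * monomial e : AddMonoidAlgebra k (Fin m → ZMod q)) =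
      ∏ l, X l ^ ((d l : ℕ) + e l) := by
    simp only [monomial, ← prod_mul_distrib, pow_add]
  by_cases hsum : ∀ l, (d l : ℕ) + e l < q
  · refine Submodule.subset_span ⟨fun l => ⟨d l + e l, hsum l⟩, ?_, hprod.symm⟩
    simp [weight, sum_add_distrib]
  · obtain ⟨l, hl⟩ := not_forall.1 hsum
    have hzero : X l ^ ((d l : ℕ) + e l) = (0 : AddMonoidAlgebra k (Fin m → ZMod q)) := by
      obtain ⟨c, hc⟩ := Nat.exists_eq_add_of_le (not_lt.1 hl)
      rw [hc, pow_add, X_pow_eq_zero hpq, zero_mul]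
    rw [hprod, prod_eq_zero (mem_univ l) hzero]
    exact zero_mem _

theorem filtration_antitone : Antitone (filtration k m q) := fun _ _ hst =>
  Submodule.span_mono <| Set.image_mono fun _ hd => le_trans hst hd

theorem filtration_mul_le {p r : ℕ} [ExpChar k p] (hpq : q = p ^ r) (s t : ℕ) :
    filtration k m q s * filtration k m q t ≤ filtration k m q (s + t) := by
  rw [filtration, filtration, Submodule.span_mul_span, Submodule.span_le]
  rintro _ ⟨_, ⟨d, hd, rfl⟩, _, ⟨e, he, rfl⟩, rfl⟩
  exact filtration_antitone (add_le_add hd he) (monomial_mul_monomial_mem hpq d e)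

theorem monomial_zero [NeZero q] : (monomial 0 : AddMonoidAlgebra k (Fin m → ZMod q)) = 1 := by
  simp [monomial]

theorem X_mem_filtration_one [NeZero q] (hq : 1 < q) (l : Fin m) :
    (X l : AddMonoidAlgebra k (Fin m → ZMod q)) ∈ filtration k m q 1 := by
  refine Submodule.subset_span ⟨Pi.single l ⟨1, hq⟩, ?_, ?_⟩
  · simp [weight, Pi.single_apply, apply_ite Fin.val]
  · simp [monomial, Pi.single_apply, apply_ite Fin.val]

theorem single_sub_one_mem_filtration_one [NeZero q] {p r : ℕ} [ExpChar k p] (hpq : q = p ^ r)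
    (hq : 1 < q) (g : Fin m → ZMod q) :
    single g (1 : k) - 1 ∈ filtration k m q 1 := by
  refine single_sub_one_mem_of_mem_closure _ (fun x hx y hy => ?_) ?_
    ((Pi.addSubmonoidClosure_range_single_one m q).symm ▸ AddSubmonoid.mem_top g)
  · exact filtration_antitone (by norm_num) <|
      filtration_mul_le hpq 1 1 (Submodule.mul_mem_mul hx hy)
  · rintro _ ⟨l, rfl⟩
    exact X_mem_filtration_one hq l

theorem mem_filtration_one_of_sum_coeff_eq_zero [NeZero q] {p r : ℕ} [ExpChar k p]
    (hpq : q = p ^ r) (hq : 1 < q) {a : AddMonoidAlgebra k (Fin m → ZMod q)}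
    (ha : ∑ g, a.coeff g = 0) : a ∈ filtration k m q 1 := by
  rw [eq_sum_smul_single_sub_one_add a, ha, zero_smul, add_zero]
  exact sum_mem fun g _ => Submodule.smul_mem _ _ (single_sub_one_mem_filtration_one hpq hq g)

theorem filtration_zero [NeZero q] {p r : ℕ} [ExpChar k p] (hpq : q = p ^ r) (hq : 1 < q) :
    filtration k m q 0 = ⊤ := by
  refine eq_top_iff.2 fun a _ => ?_
  have hone : (1 : AddMonoidAlgebra k (Fin m → ZMod q)) ∈ filtration k m q 0 :=
    Submodule.subset_span ⟨0, Nat.zero_le _, monomial_zero⟩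
  rw [eq_sum_smul_single_sub_one_add a]
  exact add_mem (sum_mem fun g _ => Submodule.smul_mem _ _ <| filtration_antitone (Nat.zero_le 1) <|
    single_sub_one_mem_filtration_one hpq hq g) (Submodule.smul_mem _ _ hone)

theorem sum_coeff_X [NeZero q] (l : Fin m) :
    ∑ g, (X l : AddMonoidAlgebra k (Fin m → ZMod q)).coeff g = 0 := by
  simp [X, one_def, coeff_sub, Finsupp.sub_apply, sum_sub_distrib]

theorem monomial_mem_pow {M : Ideal (AddMonoidAlgebra k (Fin m → ZMod q))} (hX : ∀ l, X l ∈ M)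
    (d : Fin m → Fin q) : monomial d ∈ M ^ weight d := by
  rw [monomial, weight, ← prod_pow_eq_pow_sum]
  exact Ideal.prod_mem_prod fun l _ => Ideal.pow_mem_pow (hX l) _

theorem restrictScalars_pow_eq_filtration [NeZero q] {p r : ℕ} [ExpChar k p] (hpq : q = p ^ r)
    (hq : 1 < q) (M : Ideal (AddMonoidAlgebra k (Fin m → ZMod q)))
    (hM : ∀ a, a ∈ M ↔ ∑ g, a.coeff g = 0) (s : ℕ) :
    (M ^ s).restrictScalars k = filtration k m q s := by
  refine le_antisymm ?_ ?_
  · induction s with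
    | zero => simp [filtration_zero hpq hq]
    | succ s ih =>
      rw [pow_succ, Submodule.restrictScalars_mul]
      refine (mul_le_mul' ih fun a ha => ?_).trans (filtration_mul_le hpq s 1)
      exact mem_filtration_one_of_sum_coeff_eq_zero hpq hq ((hM a).1 ha)
  · rw [filtration, Submodule.span_le]
    rintro _ ⟨d, hd, rfl⟩
    exact Ideal.pow_le_pow_right hd (monomial_mem_pow (fun l => (hM _).2 (sum_coeff_X l)) d)

theorem linearIndependent_monomial {K : Type*} [Field K] [NeZero q] {p r : ℕ} [ExpChar K p]
    (hpq : q = p ^ r) (hq : 1 < q) :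
    LinearIndependent K (monomial : (Fin m → Fin q) → AddMonoidAlgebra K (Fin m → ZMod q)) := by
  refine linearIndependent_of_top_le_span_of_card_eq_finrank ?_ ?_
  · rw [← filtration_zero (m := m) hpq hq]
    exact Submodule.span_mono (Set.image_subset_range _ _)
  · rw [Module.finrank_eq_card_basis (basis _ K)]
    simp

variable (m q) in
def digitSum (i : ℕ) : ℕ := ∑ l ∈ range m, i / q ^ l % q

noncomputable def digitMonomial (i : ℕ) : AddMonoidAlgebra k (Fin m → ZMod q) :=
  ∏ l : Fin m, X l ^ (i / q ^ (l : ℕ) % q)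

theorem digitMonomial_eq_monomial (i : Fin (q ^ m)) :
    (digitMonomial i : AddMonoidAlgebra k (Fin m → ZMod q)) =
      monomial (finFunctionFinEquiv.symm i) := by
  simp [digitMonomial, monomial]

theorem digitSum_eq_weight (i : Fin (q ^ m)) :
    digitSum m q i = weight (finFunctionFinEquiv.symm i) := by
  simp [digitSum, weight, sum_range]

theorem setOf_digitMonomial_eq_image (s : ℕ) :
    {x : AddMonoidAlgebra k (Fin m → ZMod q) |
        ∃ i, i < q ^ m ∧ s ≤ digitSum m q i ∧ x = digitMonomial i} =
      monomial '' {d | s ≤ weight d} := by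
  ext x
  constructor
  · rintro ⟨i, hi, hsi, rfl⟩
    refine ⟨_, ?_, (digitMonomial_eq_monomial ⟨i, hi⟩).symm⟩
    simpa [← digitSum_eq_weight] using hsi
  · rintro ⟨d, hd, rfl⟩
    refine ⟨finFunctionFinEquiv d, (finFunctionFinEquiv d).2, ?_, ?_⟩
    · rw [digitSum_eq_weight, Equiv.symm_apply_apply]
      exact hd
    · rw [digitMonomial_eq_monomial, Equiv.symm_apply_apply]

theorem linearIndependent_digitMonomial {K : Type*} [Field K] [NeZero q] {p r : ℕ} [ExpChar K p]
    (hpq : q = p ^ r) (hq : 1 < q) (P : ℕ → Prop) :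
    LinearIndependent K fun i : {i : ℕ // i < q ^ m ∧ P i} =>
      (digitMonomial i : AddMonoidAlgebra K (Fin m → ZMod q)) := by
  have hfamily : (fun i : {i : ℕ // i < q ^ m ∧ P i} =>
      (digitMonomial i : AddMonoidAlgebra K (Fin m → ZMod q))) =
        monomial ∘ fun i : {i : ℕ // i < q ^ m ∧ P i} => finFunctionFinEquiv.symm ⟨i, i.2.1⟩ :=
    funext fun i => digitMonomial_eq_monomial ⟨i, i.2.1⟩
  rw [hfamily]
  refine (linearIndependent_monomial hpq hq).comp _ fun i j hij => ?_
  exact Subtype.ext (congrArg Fin.val (finFunctionFinEquiv.symm.injective hij))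

end JenningsBasis

open JenningsBasis

theorem jennings_basis_radical_powers_general (p r m : ℕ) (hp : p.Prime)
    [NeZero (p ^ r)] (F : Type*) [Field F] [Fintype F] (hF : Fintype.card F = p ^ r)
    (ω : ℕ → ℕ) (hω : ∀ i, ω i = ∑ l ∈ Finset.range m, i / p ^ (r * l) % p ^ r)
    (V : ℕ → AddMonoidAlgebra F (Fin m → ZMod (p ^ r)))
    (hV : ∀ i : ℕ, V i = ∏ l : Fin m,
        (AddMonoidAlgebra.single (Pi.single l (1 : ZMod (p ^ r)) : Fin m → ZMod (p ^ r))
            (1 : F) - 1) ^ (i / p ^ (r * (l : ℕ)) % p ^ r))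
    (M : Ideal (AddMonoidAlgebra F (Fin m → ZMod (p ^ r))))
    (hM : ∀ a : AddMonoidAlgebra F (Fin m → ZMod (p ^ r)),
      a ∈ M ↔ ∑ g : Fin m → ZMod (p ^ r), a.coeff g = 0)
    (t : ℕ) :
    LinearIndependent F
        (fun i : {i : ℕ // i < p ^ (r * m) ∧ t ≤ ω i} => V i) ∧
      Submodule.span F {x | ∃ i : ℕ, i < p ^ (r * m) ∧ t ≤ ω i ∧ x = V i} =
        Submodule.restrictScalars F (M ^ t : Ideal _) := by
  have := Fact.mk hp
  have := charP_of_card_eq_prime_pow hF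
  have hq : 1 < p ^ r := hF ▸ Fintype.one_lt_card
  obtain rfl : ω = digitSum m (p ^ r) := funext fun i => by simp [hω, digitSum, pow_mul]
  obtain rfl : V = digitMonomial := funext fun i => by simp [hV, digitMonomial, X, pow_mul]
  rw [pow_mul, restrictScalars_pow_eq_filtration (p := p) rfl hq M hM, filtration,
    ← setOf_digitMonomial_eq_image]
  exact ⟨linearIndependent_digitMonomial (p := p) rfl hq _, rfl⟩

/-- With `F = F_{p^r}` and `G` the additive group of `GR(p^r, m)` (modelled as
`Fin m → ZMod (p ^ r)`), and `M` the augmentation ideal (= Jacobson radical) of `F[G]`,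
for each `1 ≤ t ≤ m(p^r - 1)` the set `B_t = {V i : ω_{p^r}(i) ≥ t}` is an `F`-linear
basis of `M^t`. -/
theorem jennings_basis_radical_powers (p r m : ℕ) (hp : p.Prime) (hr : 1 ≤ r) (hm : 1 ≤ m)
    [NeZero (p ^ r)] (F : Type*) [Field F] [Fintype F] (hF : Fintype.card F = p ^ r)
    (ω : ℕ → ℕ) (hω : ∀ i, ω i = ∑ l ∈ Finset.range m, i / p ^ (r * l) % p ^ r)
    (V : ℕ → AddMonoidAlgebra F (Fin m → ZMod (p ^ r)))
    (hV : ∀ i : ℕ, V i = ∏ l : Fin m,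
        (AddMonoidAlgebra.single (Pi.single l (1 : ZMod (p ^ r)) : Fin m → ZMod (p ^ r))
            (1 : F) - 1) ^ (i / p ^ (r * (l : ℕ)) % p ^ r))
    (M : Ideal (AddMonoidAlgebra F (Fin m → ZMod (p ^ r))))
    (hM : ∀ a : AddMonoidAlgebra F (Fin m → ZMod (p ^ r)),
      a ∈ M ↔ ∑ g : Fin m → ZMod (p ^ r), a.coeff g = 0)
    (t : ℕ) (ht1 : 1 ≤ t) (ht2 : t ≤ m * (p ^ r - 1)) :
    LinearIndependent F
        (fun i : {i : ℕ // i < p ^ (r * m) ∧ t ≤ ω i} => V i) ∧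
      Submodule.span F {x | ∃ i : ℕ, i < p ^ (r * m) ∧ t ≤ ω i ∧ x = V i} =
        Submodule.restrictScalars F (M ^ t : Ideal _) :=
  jennings_basis_radical_powers_general p r m hp F hF ω hω V hV M hM t
end

section
/- Let F be a field of characteristic p and G an elementary abelian p-group of order p^m with basis {g_0, ..., g_{m−1}}. Then the p^m elements ∏_{ν=0}^{m−1}(X^{g_ν} − 1)^{e_ν} with 0 ≤ e_ν < p form an F-linear basis of the group algebra F[G] (the Jennings basis). -/
/-!
Put `x_ν = X^{g_ν} - 1`. In characteristic `p` we have `x_ν^p = X^{p g_ν} - 1 = 0`, so every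
monomial in the `x_ν` is either zero or one of the `p^m` listed products, and these therefore span
the subalgebra generated by the `x_ν`. That subalgebra contains every `X^{g_ν} = x_ν + 1`, hence
every `X^g`, so it is all of `F[G]`. A spanning family of `p^m = |G| = dim F[G]` vectors is a basis.
-/

open AddMonoidAlgebra

theorem Algebra.adjoin_range_eq_span_prod_pow_fin {R A ι : Type*} [CommSemiring R]
    [CommSemiring A] [Algebra R A] [Fintype ι] (x : ι → A) {n : ℕ} (hx : ∀ i, x i ^ n = 0) :
    Subalgebra.toSubmodule (Algebra.adjoin R (Set.range x)) =
      Submodule.span R (Set.range fun e : ι → Fin n => ∏ i, x i ^ (e i : ℕ)) := by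
  rw [Algebra.adjoin_eq_span]
  refine le_antisymm (Submodule.span_le.2 ?_) (Submodule.span_mono ?_)
  · rintro _ hy
    obtain ⟨k, rfl⟩ := Submonoid.mem_closure_range_iff_of_fintype.1 hy
    by_cases hk : ∀ i, k i < n
    · exact Submodule.subset_span ⟨fun i => ⟨k i, hk i⟩, rfl⟩
    · push Not at hk
      obtain ⟨i, hi⟩ := hk
      have hzero : x i ^ k i = 0 := pow_eq_zero_of_le hi (hx i)
      rw [SetLike.mem_coe, Finset.prod_eq_zero (Finset.mem_univ i) hzero]
      exact zero_mem _
  · rintro _ ⟨e, rfl⟩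
    exact Submonoid.mem_closure_range_iff_of_fintype.2 ⟨_, rfl⟩

theorem AddMonoidAlgebra.adjoin_range_single_sub_one_eq_top {R M ι : Type*} [CommRing R]
    [AddCommMonoid M] {g : ι → M} (hg : AddSubmonoid.closure (Set.range g) = ⊤) :
    Algebra.adjoin R (Set.range fun i => single (g i) (1 : R) - 1) = ⊤ := by
  rw [eq_top_iff, ← (AlgHom.range_eq_top _).2 (mvPolynomial_aeval_of_surjective_of_closure hg),
    ← Algebra.adjoin_range_eq_range_aeval, Algebra.adjoin_le_iff]
  rintro _ ⟨⟨_, i, rfl⟩, rfl⟩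
  change of' R M (g i) ∈ _
  rw [of'_apply, ← sub_add_cancel (single (g i) (1 : R)) 1]
  exact add_mem (Algebra.subset_adjoin ⟨i, rfl⟩) (one_mem _)

theorem Module.Basis.addSubmonoidClosure_range_eq_top {ι G : Type*} {n : ℕ} [NeZero n]
    [AddCommGroup G] [Module (ZMod n) G] (b : Module.Basis ι (ZMod n) G) :
    AddSubmonoid.closure (Set.range b) = ⊤ := by
  refine eq_top_iff.2 fun g _ => ?_
  rw [← b.linearCombination_repr g, Finsupp.linearCombination_apply, Finsupp.sum]
  refine sum_mem fun i _ => ?_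
  rw [← ZMod.natCast_zmod_val (b.repr g i), Nat.cast_smul_eq_nsmul]
  exact nsmul_mem (AddSubmonoid.subset_closure (Set.mem_range_self i)) _

theorem AddMonoidAlgebra.single_sub_one_pow_char {k M : Type*} [CommRing k] [AddMonoid M]
    (p : ℕ) [Fact p.Prime] [CharP k p] {g : M} (hg : p • g = 0) :
    (single g (1 : k) - 1) ^ p = 0 := by
  have := charP_of_injective_algebraMap' k (A := AddMonoidAlgebra k M) p
  rw [sub_pow_char_of_commute p (Commute.one_right _), single_pow, one_pow, one_pow, hg, one_def,
    sub_self]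

/-- Let `F` be a field of characteristic `p` and `G` an elementary abelian `p`-group of order
`p^m` with basis `g_0, …, g_{m-1}` (i.e. an `m`-dimensional `ZMod p`-vector space).  Then the
`p^m` elements `∏_ν (X^(g_ν) - 1)^(e_ν)` with `0 ≤ e_ν < p` form an `F`-linear basis of the
group algebra `F[G]` (the Jennings basis). -/
theorem jennings_basis_elementary_abelian (F : Type*) [Field F] (p m : ℕ) (hp : p.Prime)
    [CharP F p] (G : Type*) [AddCommGroup G] [Module (ZMod p) G] [Fintype G]
    (b : Module.Basis (Fin m) (ZMod p) G) :
    ∃ B : Module.Basis (Fin m → Fin p) F (AddMonoidAlgebra F G),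
      ∀ e : Fin m → Fin p,
        B e = ∏ ν : Fin m, (AddMonoidAlgebra.single (b ν) (1 : F) - 1) ^ ((e ν : ℕ)) := by
  have : Fact p.Prime := ⟨hp⟩
  have hspan : Submodule.span F (Set.range fun e : Fin m → Fin p =>
      ∏ ν, (single (b ν) (1 : F) - 1) ^ (e ν : ℕ)) = ⊤ := by
    rw [← Algebra.adjoin_range_eq_span_prod_pow_fin _
        fun ν => single_sub_one_pow_char p (ZModModule.char_nsmul_eq_zero p (b ν)),
      adjoin_range_single_sub_one_eq_top b.addSubmonoidClosure_range_eq_top,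
      Algebra.top_toSubmodule]
  have hcard : Fintype.card (Fin m → Fin p) = Module.finrank F (AddMonoidAlgebra F G) := by
    rw [Module.finrank_eq_card_basis (AddMonoidAlgebra.basis G F), Module.card_fintype b]
    simp [ZMod.card]
  exact ⟨basisOfTopLeSpanOfCardEqFinrank _ hspan.ge hcard,
    fun e => by rw [coe_basisOfTopLeSpanOfCardEqFinrank]⟩
end

section
/- Let F be a field of characteristic p and G an elementary abelian p-group, and let U be a finite nonempty subset of G \ {0}. Then in F[G], ∏_{g ∈ U}(X^g − 1)^{p−1} equals ∑_{h ∈ ⟨U⟩} X^h if U is linearly independent over F_p, and equals 0 otherwise. -/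
/-!
Write `S(V) = ∑_{h ∈ V} X^h` for a subspace `V` of `G`. In characteristic `p` one has
`(x - 1)^(p-1) = 1 + x + ⋯ + x^(p-1)`, so for `g ≠ 0` the factor `(X^g - 1)^(p-1)` is `S(𝔽_p g)`.
For subspaces with `V ∩ W = 0` we have `S(V) S(W) = S(V + W)`, which gives the independent case by
induction. If `U` is dependent, some `a ∈ U` lies in the span `V` of an independent set of earlier
elements; then `X^a S(V) = S(V)`, so the factor `X^a - 1` kills `S(V)`.
-/

open scoped Classical
open Finset AddMonoidAlgebra Polynomial Submodule

instance AddMonoidAlgebra.charP {R G : Type*} [Semiring R] [AddMonoid G] (p : ℕ) [CharP R p] :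
    CharP (AddMonoidAlgebra R G) p where
  cast_eq_zero_iff n := by
    rw [← CharP.cast_eq_zero_iff R p, AddMonoidAlgebra.natCast_def, single_eq_zero]

theorem sub_one_pow_pred_eq_geom_sum {R : Type*} [CommRing R] {p : ℕ} [Fact p.Prime] [CharP R p]
    (x : R) : (x - 1) ^ (p - 1) = ∑ i ∈ range p, x ^ i := by
  have hX : (X - 1 : (ZMod p)[X]) ^ (p - 1) = ∑ i ∈ range p, X ^ i := by
    refine mul_right_cancel₀ (X_sub_C_ne_zero 1) ?_
    rw [C_1, ← pow_succ, Nat.sub_add_cancel (Fact.out : p.Prime).one_le, geom_sum_mul,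
      sub_pow_char, one_pow]
  simpa only [eval₂_pow, eval₂_sub, eval₂_X, eval₂_one, eval₂_finsetSum] using
    congrArg (eval₂ (ZMod.castHom dvd_rfl R) x) hX

theorem sum_range_natCast_eq_sum_zmod {M : Type*} [AddCommMonoid M] (n : ℕ) [NeZero n]
    (f : ZMod n → M) : ∑ i ∈ range n, f i = ∑ c, f c :=
  sum_nbij' (↑) ZMod.val (by simp) (by simp [ZMod.val_lt])
    (fun i hi => ZMod.val_cast_of_lt (mem_range.1 hi)) (by simp) (fun _ _ => rfl)

section SubmoduleSum

variable (R : Type*) {K G : Type*} [Semiring R] [Ring K] [AddCommGroup G] [Module K G] [Fintype G]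

noncomputable def submoduleSum (V : Submodule K G) : AddMonoidAlgebra R G :=
  ∑ h ∈ univ.filter (· ∈ V), single h 1

@[simp]
theorem submoduleSum_bot : submoduleSum R (⊥ : Submodule K G) = 1 := by
  simp [submoduleSum, mem_bot, sum_filter, one_def]

theorem single_mul_submoduleSum {V : Submodule K G} {a : G} (ha : a ∈ V) :
    single a (1 : R) * submoduleSum R V = submoduleSum R V := by
  simp only [submoduleSum, mul_sum, single_mul_single, mul_one]
  exact sum_equiv (Equiv.addLeft a) (by simp [V.add_mem_iff_right ha]) (fun _ _ => rfl)

theorem submoduleSum_mul_of_disjoint {V W : Submodule K G} (h : Disjoint V W) :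
    submoduleSum R V * submoduleSum R W = submoduleSum R (V ⊔ W) := by
  simp only [submoduleSum, sum_mul_sum, single_mul_single, mul_one, ← sum_product']
  refine sum_bij (fun x _ => x.1 + x.2) ?_ ?_ ?_ (fun _ _ => rfl)
  · rintro ⟨v, w⟩ hvw
    simp only [mem_product, mem_filter, mem_univ, true_and] at hvw ⊢
    exact add_mem_sup hvw.1 hvw.2
  · rintro ⟨v₁, w₁⟩ h₁ ⟨v₂, w₂⟩ h₂ heq
    simp only [mem_product, mem_filter, mem_univ, true_and] at h₁ h₂ heq
    have hv : v₁ - v₂ = w₂ - w₁ := by rw [sub_eq_sub_iff_add_eq_add, heq, add_comm]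
    have hv0 := disjoint_def.1 h _ (V.sub_mem h₁.1 h₂.1) (hv ▸ W.sub_mem h₂.2 h₁.2)
    have hw0 : w₂ - w₁ = 0 := hv ▸ hv0
    rw [sub_eq_zero] at hv0 hw0
    rw [hv0, hw0]
  · intro x hx
    obtain ⟨v, hv, w, hw, rfl⟩ := mem_sup.1 (mem_filter.1 hx).2
    exact ⟨(v, w), by simp [hv, hw], rfl⟩

end SubmoduleSum

section DivisionRing

variable (R : Type*) {K G : Type*} [CommSemiring R] [DivisionRing K] [AddCommGroup G] [Module K G]
  [Fintype G]

theorem sum_single_smul_eq_submoduleSum_span_singleton [Fintype K] {a : G} (ha : a ≠ 0) :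
    ∑ c : K, single (c • a) (1 : R) = submoduleSum R (K ∙ a) := by
  have hline : univ.filter (· ∈ K ∙ a) = univ.image (· • a : K → G) := by
    ext x
    simp [mem_span_singleton]
  rw [submoduleSum, hline, sum_image fun c _ d _ h => smul_left_injective K ha h]

theorem prod_submoduleSum_span_singleton {U : Finset G} (hU : LinearIndepOn K id (U : Set G)) :
    ∏ g ∈ U, submoduleSum R (K ∙ g) = submoduleSum R (span K U) := by
  induction U using Finset.induction_on with
  | empty => simp
  | insert a s has ih =>
    rw [coe_insert, linearIndepOn_id_insert (mod_cast has)] at hU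
    rw [prod_insert has, ih hU.1, coe_insert, span_insert,
      submoduleSum_mul_of_disjoint R (disjoint_span_singleton_of_notMem hU.2).symm]

end DivisionRing

section CharP

variable {R G : Type*} [CommRing R] {p : ℕ} [Fact p.Prime] [CharP R p] [AddCommGroup G]
  [Module (ZMod p) G] [Fintype G]

theorem single_sub_one_pow_pred_eq_submoduleSum {a : G} (ha : a ≠ 0) :
    (single a (1 : R) - 1) ^ (p - 1) = submoduleSum R (ZMod p ∙ a) := by
  rw [sub_one_pow_pred_eq_geom_sum, ← sum_single_smul_eq_submoduleSum_span_singleton R ha,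
    ← sum_range_natCast_eq_sum_zmod]
  simp [Nat.cast_smul_eq_nsmul]

theorem prod_single_sub_one_pow_pred_of_linearIndepOn {U : Finset G}
    (hU : LinearIndepOn (ZMod p) id (U : Set G)) :
    ∏ g ∈ U, (single g (1 : R) - 1) ^ (p - 1) = submoduleSum R (span (ZMod p) U) := by
  rw [← prod_submoduleSum_span_singleton R hU]
  exact prod_congr rfl fun g hg => single_sub_one_pow_pred_eq_submoduleSum (hU.ne_zero hg)

theorem prod_single_sub_one_pow_pred_of_not_linearIndepOn {U : Finset G}
    (hU : ¬ LinearIndepOn (ZMod p) id (U : Set G)) :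
    ∏ g ∈ U, (single g (1 : R) - 1) ^ (p - 1) = 0 := by
  induction U using Finset.induction_on with
  | empty => simp at hU
  | insert a s has ih =>
    rw [prod_insert has]
    by_cases hs : LinearIndepOn (ZMod p) id (s : Set G)
    · have ha : a ∈ span (ZMod p) s := by
        rw [coe_insert, linearIndepOn_id_insert (mod_cast has)] at hU
        tauto
      have hkill : (single a (1 : R) - 1) * submoduleSum R (span (ZMod p) s) = 0 := by
        rw [sub_mul, one_mul, single_mul_submoduleSum R ha, sub_self]
      obtain ⟨k, hk⟩ :=
        Nat.exists_eq_add_one_of_ne_zero (Nat.sub_ne_zero_of_lt (Fact.out : p.Prime).one_lt)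
      rw [prod_single_sub_one_pow_pred_of_linearIndepOn hs, hk, pow_succ, mul_assoc, hkill,
        mul_zero]
    · rw [ih hs, mul_zero]

end CharP

open scoped Classical in
theorem prod_over_subset_pow_general (F : Type*) [Field F] (p : ℕ) (hp : p.Prime) [CharP F p]
    (G : Type*) [AddCommGroup G] [Module (ZMod p) G] [Fintype G]
    (U : Finset G) :
    (LinearIndependent (ZMod p) (fun x : (U : Set G) => (x : G)) →
      ∏ g ∈ U, (AddMonoidAlgebra.single g (1 : F) - 1) ^ (p - 1) =
        ∑ h ∈ Finset.univ.filter (fun h : G => h ∈ Submodule.span (ZMod p) (U : Set G)),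
          AddMonoidAlgebra.single h (1 : F)) ∧
    (¬ LinearIndependent (ZMod p) (fun x : (U : Set G) => (x : G)) →
      ∏ g ∈ U, (AddMonoidAlgebra.single g (1 : F) - 1) ^ (p - 1) = 0) := by
  have := Fact.mk hp
  exact ⟨prod_single_sub_one_pow_pred_of_linearIndepOn,
    prod_single_sub_one_pow_pred_of_not_linearIndepOn⟩

open scoped Classical in
/-- Let `F` be a field of characteristic `p` and `G` an elementary abelian `p`-group
(a `ZMod p`-vector space), and `U` a finite nonempty subset of `G \ {0}`.  Then in `F[G]`,
`∏_{g ∈ U} (X^g - 1)^(p-1)` equals `∑_{h ∈ ⟨U⟩} X^h` if `U` is linearly independent over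
`F_p`, and equals `0` otherwise. -/
theorem prod_over_subset_pow (F : Type*) [Field F] (p : ℕ) (hp : p.Prime) [CharP F p]
    (G : Type*) [AddCommGroup G] [Module (ZMod p) G] [Fintype G] [DecidableEq G]
    (U : Finset G) (hU : U.Nonempty) (h0 : (0 : G) ∉ U) :
    (LinearIndependent (ZMod p) (fun x : (U : Set G) => (x : G)) →
      ∏ g ∈ U, (AddMonoidAlgebra.single g (1 : F) - 1) ^ (p - 1) =
        ∑ h ∈ Finset.univ.filter (fun h : G => h ∈ Submodule.span (ZMod p) (U : Set G)),
          AddMonoidAlgebra.single h (1 : F)) ∧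
    (¬ LinearIndependent (ZMod p) (fun x : (U : Set G) => (x : G)) →
      ∏ g ∈ U, (AddMonoidAlgebra.single g (1 : F) - 1) ^ (p - 1) = 0) :=
  prod_over_subset_pow_general F p hp G U
end

section
/- With q = p^r and N(t) = #{k ∈ [0, q^m − 1] : ω_q(k) = t}, the dimension of the GRM code C_ν(m,q) of length q^m and order ν satisfies dim C_ν(m,q) − dim C_{ν−1}(m,q) = N(m(q−1) − ν) for 1 ≤ ν ≤ m(q−1) − 1, and dim C_0(m,q) = 1. -/
/-! The generator `f_ν` is the product of the distinct factors `Z - γ^i` over the exponents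
`i < q^m` with `0 < ω_q(i) ≤ m(q-1) - ν - 1`. Since `q^m - 1` is the only such `i` of maximal
digit sum `m(q-1)`, all these `γ^i` are distinct `(q^m-1)`-th roots of unity, so `f_ν` divides
`Z^(q^m-1) - 1` and the ideal it generates has dimension `q^m - 1 - deg f_ν`; the injective `φ`
preserves it. Passing from `ν` to `ν - 1` adds exactly the exponents of digit sum `m(q-1) - ν`,
and for `ν = 0` every exponent except `0` and `q^m - 1` occurs, leaving dimension one. -/

open Polynomial Finset Module

theorem Nat.sum_div_pow_mod_mul_pow (q m i : ℕ) :
    ∑ l ∈ range m, i / q ^ l % q * q ^ l = i % q ^ m := by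
  induction m with
  | zero => simp [Nat.mod_one]
  | succ m ih => rw [sum_range_succ, ih, Nat.mod_pow_succ, mul_comm]

theorem Nat.sum_sub_one_mul_pow {q : ℕ} (hq : 0 < q) (m : ℕ) :
    ∑ l ∈ range m, (q - 1) * q ^ l = q ^ m - 1 := by
  rw [← mul_sum, mul_comm, geom_sum_mul_of_one_le hq]

def digitSum (q m i : ℕ) : ℕ := ∑ l ∈ range m, i / q ^ l % q

theorem digitSum_le {q : ℕ} (hq : 0 < q) (m i : ℕ) : digitSum q m i ≤ m * (q - 1) :=
  calc digitSum q m i ≤ ∑ _l ∈ range m, (q - 1) :=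
        sum_le_sum fun _ _ => Nat.le_sub_one_of_lt (Nat.mod_lt _ hq)
    _ = m * (q - 1) := by rw [sum_const, card_range, smul_eq_mul]

theorem digitSum_eq_zero_iff {q m i : ℕ} (hi : i < q ^ m) : digitSum q m i = 0 ↔ i = 0 := by
  refine ⟨fun h => ?_, by rintro rfl; simp [digitSum]⟩
  rw [digitSum, sum_eq_zero_iff] at h
  rw [← Nat.mod_eq_of_lt hi, ← Nat.sum_div_pow_mod_mul_pow]
  exact sum_eq_zero fun l hl => by rw [h l hl, zero_mul]

theorem digitSum_eq_mul_sub_one_iff {q m i : ℕ} (hq : 0 < q) (hi : i < q ^ m) :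
    digitSum q m i = m * (q - 1) ↔ i = q ^ m - 1 := by
  have hle : ∀ l ∈ range m, i / q ^ l % q ≤ q - 1 :=
    fun _ _ => Nat.le_sub_one_of_lt (Nat.mod_lt _ hq)
  have hle' : ∀ l ∈ range m, i / q ^ l % q * q ^ l ≤ (q - 1) * q ^ l :=
    fun l hl => Nat.mul_le_mul_right _ (hle l hl)
  calc digitSum q m i = m * (q - 1) ↔ ∀ l ∈ range m, i / q ^ l % q = q - 1 := by
        rw [← sum_eq_sum_iff_of_le hle, sum_const, card_range, smul_eq_mul, digitSum]
    _ ↔ ∀ l ∈ range m, i / q ^ l % q * q ^ l = (q - 1) * q ^ l :=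
        forall₂_congr fun l _ => (Nat.mul_left_inj (pow_pos hq l).ne').symm
    _ ↔ i = q ^ m - 1 := by
        rw [← sum_eq_sum_iff_of_le hle', Nat.sum_div_pow_mod_mul_pow, Nat.mod_eq_of_lt hi,
          Nat.sum_sub_one_mul_pow hq]

theorem lt_pow_sub_one_of_digitSum_lt {q m i : ℕ} (hq : 0 < q) (hi : i < q ^ m)
    (h : digitSum q m i < m * (q - 1)) : i < q ^ m - 1 := by
  have := (digitSum_eq_mul_sub_one_iff hq hi).not.mp h.ne
  omega

theorem filter_digitSum_pos_le_eq_Ioo {q : ℕ} (hq : 0 < q) (m : ℕ) :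
    (range (q ^ m)).filter (fun i => 0 < digitSum q m i ∧ digitSum q m i ≤ m * (q - 1) - 1) =
      Ioo 0 (q ^ m - 1) := by
  ext i
  simp only [mem_filter, mem_range, mem_Ioo]
  constructor
  · rintro ⟨hi, hpos, hle⟩
    exact ⟨Nat.pos_of_ne_zero ((digitSum_eq_zero_iff hi).not.mp hpos.ne'),
      lt_pow_sub_one_of_digitSum_lt hq hi (by omega)⟩
  · rintro ⟨hpos, hi⟩
    have hi' : i < q ^ m := by omega
    have h0 := (digitSum_eq_zero_iff hi').not.mpr hpos.ne'
    have hmax := (digitSum_eq_mul_sub_one_iff hq hi').not.mpr hi.ne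
    have := digitSum_le hq m i
    omega

theorem card_filter_pos_le_succ {α : Type*} [DecidableEq α] (s : Finset α) (f : α → ℕ)
    (t : ℕ) :
    #(s.filter fun a => 0 < f a ∧ f a ≤ t + 1) =
      #(s.filter fun a => 0 < f a ∧ f a ≤ t) + #(s.filter fun a => f a = t + 1) := by
  rw [← card_union_of_disjoint (disjoint_filter.2 fun _ _ h => by omega), ← filter_or]
  exact congrArg card (filter_congr fun _ _ => by omega)

theorem IsPrimitiveRoot.prod_X_sub_C_pow_dvd {R : Type*} [CommRing R] [IsDomain R] {ζ : R}
    {n : ℕ} (hζ : IsPrimitiveRoot ζ n) {S : Finset ℕ} (hS : S ⊆ range n) :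
    ∏ i ∈ S, (X - C (ζ ^ i)) ∣ X ^ n - 1 := by
  rcases n.eq_zero_or_pos with rfl | hn
  · simp [subset_empty.mp hS]
  rw [← C_1, X_pow_sub_C_eq_prod hζ hn (one_pow n)]
  simpa only [mul_one] using prod_dvd_prod_of_subset S (range n) (fun i => X - C (ζ ^ i)) hS

theorem Polynomial.finrank_span_mk_add_natDegree {F : Type*} [Field F] {f g : F[X]}
    (hf : f ≠ 0) (hgf : g ∣ f) :
    finrank F ((Ideal.span {Ideal.Quotient.mk (Ideal.span {f}) g}).restrictScalars F) +
      g.natDegree = f.natDegree := by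
  set I := Ideal.span {Ideal.Quotient.mk (Ideal.span {f}) g}
  have hI : I = (Ideal.span {g}).map (Ideal.Quotient.mkₐ F (Ideal.span {f})) := by
    rw [Ideal.map_span, Set.image_singleton]; rfl
  have hquot :
      ((F[X] ⧸ Ideal.span {f}) ⧸ I.restrictScalars F) ≃ₗ[F] F[X] ⧸ Ideal.span {g} :=
    (Submodule.Quotient.restrictScalarsEquiv F I).trans <| hI ▸
      (DoubleQuot.quotQuotEquivQuotOfLEₐ F
        (Ideal.span_singleton_le_span_singleton.mpr hgf)).toLinearEquiv
  have hg : g ≠ 0 := ne_zero_of_dvd_ne_zero hf hgf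
  have hfin : finrank F (F[X] ⧸ Ideal.span {f}) = f.natDegree :=
    (AdjoinRoot.powerBasis hf).finrank.trans (AdjoinRoot.powerBasis_dim hf)
  have hgfin : finrank F (F[X] ⧸ Ideal.span {g}) = g.natDegree :=
    (AdjoinRoot.powerBasis hg).finrank.trans (AdjoinRoot.powerBasis_dim hg)
  have : Module.Finite F (F[X] ⧸ Ideal.span {f}) := (AdjoinRoot.powerBasis hf).finite
  have hadd := Submodule.finrank_quotient_add_finrank (I.restrictScalars F)
  rw [hquot.finrank_eq, hgfin, hfin] at hadd
  omega

theorem finrank_span_mk_add_card_of_map_eq_prod {F K : Type*} [Field F] [Field K]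
    [Algebra F K] {n : ℕ} (hn : 0 < n) {ζ : K} (hζ : IsPrimitiveRoot ζ n) {S : Finset ℕ}
    (hS : S ⊆ range n) {f : F[X]} (hf : f.map (algebraMap F K) = ∏ i ∈ S, (X - C (ζ ^ i))) :
    finrank F ((Ideal.span {Ideal.Quotient.mk (Ideal.span {X ^ n - 1}) f}).restrictScalars F) +
      #S = n := by
  have hdvd : f ∣ X ^ n - 1 := by
    rw [← map_dvd_map' (algebraMap F K), hf, Polynomial.map_sub, Polynomial.map_pow, map_X,
      Polynomial.map_one]
    exact hζ.prod_X_sub_C_pow_dvd hS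
  have hdeg : f.natDegree = #S := by
    rw [← natDegree_map_eq_of_injective (algebraMap F K).injective, hf,
      natDegree_finsetProd_X_sub_C_eq_card]
  have hXn : (X ^ n - 1 : F[X]).natDegree = n := by
    simpa using natDegree_X_pow_sub_C (r := (1 : F))
  simpa only [hdeg, hXn] using
    finrank_span_mk_add_natDegree (ne_zero_of_natDegree_gt (hXn ▸ hn)) hdvd

theorem GRM_dimension_differences_general (m q : ℕ) (hm : 1 ≤ m)
    (Fq : Type*) [Field Fq] [Fintype Fq] (hFq : Fintype.card Fq = q)
    (K : Type*) [Field K] [Fintype K] (hK : Fintype.card K = q ^ m) [Algebra Fq K]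
    (γ : Kˣ) (hγ : ∀ u : Kˣ, u ∈ Subgroup.zpowers γ)
    (ω : ℕ → ℕ) (hω : ∀ i, ω i = ∑ l ∈ Finset.range m, i / q ^ l % q)
    (N : ℕ → ℕ)
    (hN : ∀ t, N t = ((Finset.range (q ^ m)).filter (fun k => ω k = t)).card)
    (φ : (Polynomial Fq ⧸ (Ideal.span {Polynomial.X ^ (q ^ m - 1) - 1} :
            Ideal (Polynomial Fq))) →ₗ[Fq] AddMonoidAlgebra Fq (Fin m → ZMod q))
    (hφinj : Function.Injective φ)
    (Fpoly : ℕ → Polynomial Fq)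
    (hFpoly : ∀ k, (Fpoly k).map (algebraMap Fq K) =
      ∏ i ∈ (Finset.range (q ^ m)).filter
          (fun i => 0 < ω i ∧ ω i ≤ m * (q - 1) - k - 1),
        (Polynomial.X - Polynomial.C ((γ : K) ^ i)))
    (Code : ℕ → Submodule Fq (AddMonoidAlgebra Fq (Fin m → ZMod q)))
    (hCode : ∀ k, Code k = Submodule.map φ
      (Submodule.restrictScalars Fq (Ideal.span {Ideal.Quotient.mk _ (Fpoly k)}))) :
    (∀ ν : ℕ, 1 ≤ ν → ν ≤ m * (q - 1) - 1 →
        Module.finrank Fq (Code ν) - Module.finrank Fq (Code (ν - 1)) =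
          N (m * (q - 1) - ν)) ∧
      Module.finrank Fq (Code 0) = 1 := by
  classical
  have hq : 1 < q := hFq ▸ Fintype.one_lt_card
  have hqm : 1 < q ^ m := Nat.one_lt_pow (by omega) hq
  obtain rfl : ω = digitSum q m := funext hω
  have hprim : IsPrimitiveRoot (γ : K) (q ^ m - 1) := by
    rw [← hK, ← Fintype.card_units, ← Nat.card_eq_fintype_card,
      ← orderOf_eq_card_of_forall_mem_zpowers hγ, IsPrimitiveRoot.coe_units_iff]
    exact IsPrimitiveRoot.orderOf γ
  have hdim (k : ℕ) : finrank Fq (Code k) + #((range (q ^ m)).filter fun i =>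
      0 < digitSum q m i ∧ digitSum q m i ≤ m * (q - 1) - k - 1) = q ^ m - 1 := by
    rw [hCode k, ← (Submodule.equivMapOfInjective φ hφinj _).finrank_eq]
    refine finrank_span_mk_add_card_of_map_eq_prod (by omega) hprim (fun i hi => ?_) (hFpoly k)
    simp only [mem_filter, mem_range] at hi ⊢
    exact lt_pow_sub_one_of_digitSum_lt (by omega) hi.1 (by omega)
  refine ⟨fun ν hν1 hν2 => ?_, ?_⟩
  · obtain ⟨t, ht⟩ : ∃ t, m * (q - 1) - ν = t + 1 := ⟨m * (q - 1) - ν - 1, by omega⟩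
    have hprev := hdim (ν - 1)
    have hcur := hdim ν
    rw [show m * (q - 1) - (ν - 1) - 1 = t + 1 by omega, card_filter_pos_le_succ] at hprev
    rw [show m * (q - 1) - ν - 1 = t by omega] at hcur
    rw [ht, hN]
    omega
  · have h0 := hdim 0
    rw [Nat.sub_zero, filter_digitSum_pos_le_eq_Ioo (by omega), Nat.card_Ioo] at h0
    omega

/-- With `q = p^r` and `N(t) = #{k ∈ [0, q^m-1] : ω_q(k) = t}`, the dimension of the GRM
code `C_ν(m,q)` of length `q^m` and order `ν` satisfies
`dim C_ν(m,q) - dim C_{ν-1}(m,q) = N(m(q-1) - ν)` for `1 ≤ ν ≤ m(q-1)-1`, and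
`dim C_0(m,q) = 1`.  Here `C_ν(m,q) = φ(HC_ν(m,q))` where `HC_ν(m,q)` is generated by
`f_ν(z) = ∏_{0<ω_q(i)≤m(q-1)-ν-1}(z - γ^i)` in `F_q[Z]/(Z^(q^m-1)-1)` and `φ` is the
injective extension map into `F_q[G]`, `G` the additive group of `GR(p^r,m)`. -/
theorem GRM_dimension_differences (p r m q : ℕ) (hp : p.Prime) (hr : 1 ≤ r) (hm : 1 ≤ m)
    (hq : q = p ^ r) [NeZero q]
    (Fq : Type*) [Field Fq] [Fintype Fq] (hFq : Fintype.card Fq = q)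
    (K : Type*) [Field K] [Fintype K] (hK : Fintype.card K = q ^ m) [Algebra Fq K]
    (γ : Kˣ) (hγ : ∀ u : Kˣ, u ∈ Subgroup.zpowers γ)
    (ω : ℕ → ℕ) (hω : ∀ i, ω i = ∑ l ∈ Finset.range m, i / q ^ l % q)
    (N : ℕ → ℕ)
    (hN : ∀ t, N t = ((Finset.range (q ^ m)).filter (fun k => ω k = t)).card)
    (g : Fin (q ^ m - 1) → (Fin m → ZMod q)) (hginj : Function.Injective g)
    (hgsurj : ∀ x : Fin m → ZMod q, x ≠ 0 → ∃ i, g i = x)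
    (φ : (Polynomial Fq ⧸ (Ideal.span {Polynomial.X ^ (q ^ m - 1) - 1} :
            Ideal (Polynomial Fq))) →ₗ[Fq] AddMonoidAlgebra Fq (Fin m → ZMod q))
    (hφinj : Function.Injective φ)
    (hφ : ∀ f : Polynomial Fq, f.natDegree < q ^ m - 1 →
      φ (Ideal.Quotient.mk _ f) =
        AddMonoidAlgebra.single (0 : Fin m → ZMod q)
            (-(∑ i ∈ Finset.range (q ^ m - 1), f.coeff i)) +
          ∑ i : Fin (q ^ m - 1), AddMonoidAlgebra.single (g i) (f.coeff (i : ℕ)))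
    (Fpoly : ℕ → Polynomial Fq)
    (hFpoly : ∀ k, (Fpoly k).map (algebraMap Fq K) =
      ∏ i ∈ (Finset.range (q ^ m)).filter
          (fun i => 0 < ω i ∧ ω i ≤ m * (q - 1) - k - 1),
        (Polynomial.X - Polynomial.C ((γ : K) ^ i)))
    (Code : ℕ → Submodule Fq (AddMonoidAlgebra Fq (Fin m → ZMod q)))
    (hCode : ∀ k, Code k = Submodule.map φ
      (Submodule.restrictScalars Fq (Ideal.span {Ideal.Quotient.mk _ (Fpoly k)}))) :
    (∀ ν : ℕ, 1 ≤ ν → ν ≤ m * (q - 1) - 1 →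
        Module.finrank Fq (Code ν) - Module.finrank Fq (Code (ν - 1)) =
          N (m * (q - 1) - ν)) ∧
      Module.finrank Fq (Code 0) = 1 :=
  GRM_dimension_differences_general m q hm Fq hFq K hK γ hγ ω hω N hN φ hφinj Fpoly hFpoly Code
    hCode
end
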